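/- arXiv:1402.2848 — 4 statements merged into one kernel-verified Lean document; each statement's English description precedes it below -/
import Mathlib

section
/- Let n ≥ 2, let p > 1 be a real number and let k ≥ 1 be an integer with kp < n. Then there exists a constant C > 0, depending only on n, p and k, such that for every smooth compactly supported function u : ℝⁿ → ℝ one has ‖u‖_{L^{p_k}(ℝⁿ)} ≤ C ‖ |∂^k u| ‖_{L^p(ℝⁿ)}, where p_k = pn/(n − pk). -/
/-!
Apply the Gagliardo–Nirenberg–Sobolev inequality `‖v‖_{q'} ≤ C ‖Dv‖_q`, `1/q' = 1/q - 1/n`,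
to `v = D^m u`, which takes values in the finite-dimensional space of `m`-linear maps and
satisfies `‖Dv‖ = ‖D^{m+1} u‖`. The exponents `p_j = pn/(n - pj)` obey exactly
`1/p_{j+1} = 1/p_j - 1/n`, so `k` such steps, starting from `p_0 = p`, lower the order of
differentiation from `k` to `0` and raise the exponent from `p` to `p_k`.
-/

open MeasureTheory Module
open scoped NNReal ENNReal ContDiff

instance ContinuousMultilinearMap.finiteDimensional {ι : Type*} [Fintype ι]
    {E : ι → Type*} [∀ i, NormedAddCommGroup (E i)] [∀ i, NormedSpace ℝ (E i)]
    [∀ i, FiniteDimensional ℝ (E i)] {F : Type*} [NormedAddCommGroup F] [NormedSpace ℝ F]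
    [FiniteDimensional ℝ F] :
    FiniteDimensional ℝ (ContinuousMultilinearMap ℝ E F) :=
  Module.Finite.of_injective (ContinuousMultilinearMap.toMultilinearMapLinear (R' := ℝ))
    ContinuousMultilinearMap.toMultilinearMap_injective

theorem eLpNorm_iteratedFDeriv_zero {𝕜 E F : Type*} [NontriviallyNormedField 𝕜]
    [NormedAddCommGroup E] [NormedSpace 𝕜 E] [NormedAddCommGroup F] [NormedSpace 𝕜 F]
    [MeasurableSpace E] (f : E → F) (q : ℝ≥0∞) (μ : Measure E) :
    eLpNorm (iteratedFDeriv 𝕜 0 f) q μ = eLpNorm f q μ :=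
  eLpNorm_congr_norm_ae (ae_of_all _ fun _ => norm_iteratedFDeriv_zero)

noncomputable def sobolevExponent (d : ℕ) (p : ℝ) (j : ℕ) : ℝ≥0 :=
  (p * d / (d - p * j)).toNNReal

section SobolevExponent

variable {d : ℕ} {p : ℝ}

theorem sobolevExponent_zero (hd : 0 < d) : sobolevExponent d p 0 = p.toNNReal := by
  have : (d : ℝ) ≠ 0 := by positivity
  simp [sobolevExponent, this]

theorem one_le_sobolevExponent (hp : 1 ≤ p) {j : ℕ} (hj : j * p < d) :
    1 ≤ sobolevExponent d p j := by
  have hpos : 0 < (d : ℝ) - p * j := by linarith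
  rw [sobolevExponent, Real.one_le_toNNReal, le_div_iff₀ hpos]
  nlinarith [j.cast_nonneg (α := ℝ)]

theorem inv_sobolevExponent_succ (hp : 0 < p) {j : ℕ} (hj : ((j + 1 : ℕ) : ℝ) * p < d) :
    (sobolevExponent d p (j + 1) : ℝ)⁻¹ = (sobolevExponent d p j : ℝ)⁻¹ - (d : ℝ)⁻¹ := by
  push_cast at hj
  have hd : (0 : ℝ) < d := by nlinarith [j.cast_nonneg (α := ℝ)]
  have hpos : 0 < (d : ℝ) - p * (j + 1) := by linarith
  have hpos' : 0 < (d : ℝ) - p * j := by linarith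
  simp only [sobolevExponent, Nat.cast_add, Nat.cast_one]
  rw [Real.coe_toNNReal _ (by positivity), Real.coe_toNNReal _ (by positivity)]
  field_simp
  ring

end SobolevExponent

section Sobolev

variable {E F : Type*} [NormedAddCommGroup E] [NormedSpace ℝ E] [FiniteDimensional ℝ E]
  [MeasurableSpace E] [BorelSpace E] {μ : Measure E} [μ.IsAddHaarMeasure]
  [NormedAddCommGroup F] [NormedSpace ℝ F] [FiniteDimensional ℝ F]

theorem eLpNorm_iteratedFDeriv_le_eLpNorm_iteratedFDeriv_succ {u : E → F} {m : ℕ}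
    (hu : ContDiff ℝ (m + 1) u) (h2u : HasCompactSupport u) {q q' : ℝ≥0} (hq : 1 ≤ q)
    (hE : 0 < finrank ℝ E) (hq' : (q' : ℝ)⁻¹ = q⁻¹ - (finrank ℝ E : ℝ)⁻¹) :
    eLpNorm (iteratedFDeriv ℝ m u) q' μ ≤
      SNormLESNormFDerivOfEqConst (ContinuousMultilinearMap ℝ (fun _ : Fin m => E) F) μ q *
        eLpNorm (iteratedFDeriv ℝ (m + 1) u) q μ := by
  have hv : ContDiff ℝ 1 (iteratedFDeriv ℝ m u) :=
    hu.iteratedFDeriv_right (by norm_cast; omega)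
  have hnorm : eLpNorm (fderiv ℝ (iteratedFDeriv ℝ m u)) q μ =
      eLpNorm (iteratedFDeriv ℝ (m + 1) u) q μ := by
    rw [← eLpNorm_norm (fderiv ℝ (iteratedFDeriv ℝ m u)),
      ← eLpNorm_norm (iteratedFDeriv ℝ (m + 1) u)]
    exact congrArg (eLpNorm · q μ) (funext fun _ => norm_fderiv_iteratedFDeriv)
  rw [← hnorm]
  exact eLpNorm_le_eLpNorm_fderiv_of_eq μ hv (h2u.iteratedFDeriv m) hq hE hq'

theorem exists_eLpNorm_iteratedFDeriv_le_sobolevExponent {p : ℝ} (hp : 1 ≤ p) {j : ℕ}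
    (hj : j * p < finrank ℝ E) (m : ℕ) :
    ∃ C : ℝ≥0, ∀ u : E → F, ContDiff ℝ ∞ u → HasCompactSupport u →
      eLpNorm (iteratedFDeriv ℝ m u) (sobolevExponent (finrank ℝ E) p j) μ ≤
        C * eLpNorm (iteratedFDeriv ℝ (m + j) u) p.toNNReal μ := by
  have hE : 0 < finrank ℝ E := by
    exact_mod_cast (mul_nonneg j.cast_nonneg (zero_le_one.trans hp)).trans_lt hj
  induction j generalizing m with
  | zero => exact ⟨1, fun u _ _ => by simp [sobolevExponent_zero hE]⟩
  | succ j ih =>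
    have hj' : (j : ℝ) * p < finrank ℝ E := by
      push_cast at hj; linarith
    obtain ⟨C, hC⟩ := ih hj' (m + 1)
    refine ⟨SNormLESNormFDerivOfEqConst (ContinuousMultilinearMap ℝ (fun _ : Fin m => E) F) μ
      (sobolevExponent (finrank ℝ E) p j) * C, fun u hu h2u => ?_⟩
    calc eLpNorm (iteratedFDeriv ℝ m u) (sobolevExponent (finrank ℝ E) p (j + 1)) μ
        ≤ _ * eLpNorm (iteratedFDeriv ℝ (m + 1) u) (sobolevExponent (finrank ℝ E) p j) μ :=
          eLpNorm_iteratedFDeriv_le_eLpNorm_iteratedFDeriv_succ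
            (hu.of_le (by exact_mod_cast le_top)) h2u (one_le_sobolevExponent hp hj') hE
            (inv_sobolevExponent_succ (by linarith) hj)
      _ ≤ _ * (C * eLpNorm (iteratedFDeriv ℝ (m + 1 + j) u) p.toNNReal μ) := by
          gcongr
          exact hC u hu h2u
      _ = _ := by rw [add_right_comm m 1 j, add_assoc, ← mul_assoc, ENNReal.coe_mul]

end Sobolev

theorem stmt_1_general (n : ℕ) (p : ℝ) (hp : 1 < p) (k : ℕ)
    (hkp : (k : ℝ) * p < n) :
    ∃ C : ℝ, 0 < C ∧
      ∀ u : EuclideanSpace ℝ (Fin n) → ℝ,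
        ContDiff ℝ (⊤ : ℕ∞) u → HasCompactSupport u →
        eLpNorm u (ENNReal.ofReal (p * n / (n - p * k))) volume ≤
          ENNReal.ofReal C *
            eLpNorm (fun x => ‖iteratedFDeriv ℝ k u x‖) (ENNReal.ofReal p) volume := by
  rw [← finrank_euclideanSpace_fin (𝕜 := ℝ) (n := n)] at hkp
  obtain ⟨C, hC⟩ := exists_eLpNorm_iteratedFDeriv_le_sobolevExponent (F := ℝ) (μ := volume)
    hp.le hkp 0
  rw [finrank_euclideanSpace_fin, zero_add] at hC
  refine ⟨C + 1, by positivity, fun u hu h2u => ?_⟩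
  rw [eLpNorm_norm, ← eLpNorm_iteratedFDeriv_zero (𝕜 := ℝ)]
  calc eLpNorm (iteratedFDeriv ℝ 0 u) (sobolevExponent n p k) volume
      ≤ C * eLpNorm (iteratedFDeriv ℝ k u) p.toNNReal volume := hC u hu h2u
    _ ≤ ENNReal.ofReal (C + 1) * eLpNorm (iteratedFDeriv ℝ k u) p.toNNReal volume := by
      gcongr
      rw [← ENNReal.ofReal_coe_nnreal]
      exact ENNReal.ofReal_le_ofReal (by linarith)

/-- **Iterated Gagliardo–Nirenberg–Sobolev inequality**: for `n ≥ 2`, `p > 1`, `k ≥ 1`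
with `kp < n`, there is `C > 0` (depending only on `n, p, k`) such that for every smooth
compactly supported `u : ℝⁿ → ℝ`, `‖u‖_{L^{p_k}} ≤ C ‖ |∂^k u| ‖_{L^p}` with
`p_k = pn/(n − pk)`. -/
theorem stmt_1 (n : ℕ) (hn : 2 ≤ n) (p : ℝ) (hp : 1 < p) (k : ℕ) (hk : 1 ≤ k)
    (hkp : (k : ℝ) * p < n) :
    ∃ C : ℝ, 0 < C ∧
      ∀ u : EuclideanSpace ℝ (Fin n) → ℝ,
        ContDiff ℝ (⊤ : ℕ∞) u → HasCompactSupport u →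
        eLpNorm u (ENNReal.ofReal (p * n / (n - p * k))) volume ≤
          ENNReal.ofReal C *
            eLpNorm (fun x => ‖iteratedFDeriv ℝ k u x‖) (ENNReal.ofReal p) volume :=
  stmt_1_general n p hp k hkp
end

section
/- Let ω : ℝ × (0,∞) × ℝ → ℝ, (t,ρ,z) ↦ ω(t,ρ,z), be a smooth function and set ω̄ := ω/ρ⁴. Then the pointwise identity ρ⁻⁴ ( −∂²_t ω + ∂²_ρ ω + ∂²_z ω + ρ⁻¹ ∂_ρ ω − 4ρ⁻¹ ∂_ρ ω ) = −∂²_t ω̄ + ∂²_ρ ω̄ + ∂²_z ω̄ + 5ρ⁻¹ ∂_ρ ω̄ holds on ℝ × (0,∞) × ℝ. Consequently ω satisfies the axially symmetric linearized twist equation −∂²_t ω + ³Δω = 4ρ⁻¹∂_ρω if and only if ω̄ satisfies the flat wave equation in seven space dimensions, −∂²_t ω̄ + ⁽⁷⁾Δ ω̄ = 0. -/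
noncomputable section

/-- Functions of `(t, ρ, z)`. -/
abbrev F3 := ℝ → ℝ → ℝ → ℝ

/-- Partial derivative with respect to `t`. -/
noncomputable def pdT (f : F3) : F3 := fun t ρ z => deriv (fun s => f s ρ z) t

/-- Partial derivative with respect to `ρ`. -/
noncomputable def pdR (f : F3) : F3 := fun t ρ z => deriv (fun s => f t s z) ρ

/-- Partial derivative with respect to `z`. -/
noncomputable def pdZ (f : F3) : F3 := fun t ρ z => deriv (fun s => f t ρ s) z

/-- The flat 3-dimensional Laplacian on axially symmetric functions,
`³Δf = ∂²_ρ f + ∂²_z f + ρ⁻¹ ∂_ρ f`. -/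
noncomputable def lap3 (f : F3) : F3 :=
  fun t ρ z => pdR (pdR f) t ρ z + pdZ (pdZ f) t ρ z + ρ⁻¹ * pdR f t ρ z

/-- Smoothness on `ℝ_t × (0,∞)_ρ × ℝ_z`. -/
def SmoothOnHalf (f : F3) : Prop :=
  ContDiffOn ℝ (⊤ : ℕ∞) (fun q : ℝ × ℝ × ℝ => f q.1 q.2.1 q.2.2)
    {q : ℝ × ℝ × ℝ | 0 < q.2.1}

/-!
Writing `ω̄(t, ρ, z) = ω(t, ρ, z) · ρ⁻⁴`, the `t`- and `z`-derivatives commute with the weight,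
while Leibniz' rule in `ρ` gives `ω̄_ρ = ρ⁻⁴ ω_ρ - 4 ρ⁻⁵ ω` and
`ω̄_ρρ = ρ⁻⁴ ω_ρρ - 8 ρ⁻⁵ ω_ρ + 20 ρ⁻⁶ ω`. In `ω̄_ρρ + 5 ρ⁻¹ ω̄_ρ` the zeroth-order terms cancel
(`20 - 5 · 4 = 0`) and the first-order ones combine to `-3 ρ⁻⁵ ω_ρ = ρ⁻⁴ (ρ⁻¹ - 4 ρ⁻¹) ω_ρ`.
-/

open Set

lemma hasDerivAt_mul_zpow {u : ℝ → ℝ} {ρ : ℝ} (m : ℤ) (hu : DifferentiableAt ℝ u ρ)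
    (hρ : ρ ≠ 0) :
    HasDerivAt (fun s => u s * s ^ m) (deriv u ρ * ρ ^ m + m * u ρ * ρ ^ (m - 1)) ρ :=
  (hu.hasDerivAt.fun_mul (hasDerivAt_zpow m ρ (.inl hρ))).congr_deriv (by ring)

lemma deriv_deriv_mul_zpow {u : ℝ → ℝ} {ρ : ℝ} (m : ℤ) (hu : ContDiffOn ℝ 2 u (Ioi 0))
    (hρ : 0 < ρ) :
    deriv (deriv fun s => u s * s ^ m) ρ
      = deriv (deriv u) ρ * ρ ^ m + 2 * m * deriv u ρ * ρ ^ (m - 1)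
        + m * (m - 1) * u ρ * ρ ^ (m - 2) := by
  have hu₁ : ∀ s ∈ Ioi (0 : ℝ), DifferentiableAt ℝ u s := fun s hs =>
    (hu.differentiableOn two_ne_zero s hs).differentiableAt (isOpen_Ioi.mem_nhds hs)
  have hu₂ : DifferentiableAt ℝ (deriv u) ρ :=
    ((hu.deriv_of_isOpen (m := 1) isOpen_Ioi (by norm_num)).differentiableOn one_ne_zero
      ρ hρ).differentiableAt (isOpen_Ioi.mem_nhds hρ)
  have hfirst : deriv (fun s => u s * s ^ m)
      =ᶠ[nhds ρ] fun s => deriv u s * s ^ m + m * (u s * s ^ (m - 1)) := by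
    filter_upwards [isOpen_Ioi.mem_nhds hρ] with s hs
    rw [(hasDerivAt_mul_zpow m (hu₁ s hs) (ne_of_gt hs)).deriv]
    ring
  have hsecond := (hasDerivAt_mul_zpow m hu₂ hρ.ne').fun_add
    ((hasDerivAt_mul_zpow (m - 1) (hu₁ ρ hρ) hρ.ne').const_mul (m : ℝ))
  rw [hfirst.deriv_eq, hsecond.deriv, sub_sub, one_add_one_eq_two]
  push_cast
  ring

lemma pdT_div_radial (f : F3) (g : ℝ → ℝ) :
    pdT (fun t ρ z => f t ρ z / g ρ) = fun t ρ z => pdT f t ρ z / g ρ := by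
  funext t ρ z
  exact deriv_div_const _

lemma pdZ_div_radial (f : F3) (g : ℝ → ℝ) :
    pdZ (fun t ρ z => f t ρ z / g ρ) = fun t ρ z => pdZ f t ρ z / g ρ := by
  funext t ρ z
  exact deriv_div_const _

lemma SmoothOnHalf.contDiffOn_radial {f : F3} (hf : SmoothOnHalf f) (t z : ℝ) (n : ℕ) :
    ContDiffOn ℝ n (fun s => f t s z) (Ioi 0) :=
  (hf.comp (contDiff_const.prodMk (contDiff_id.prodMk contDiff_const)).contDiffOn
    fun _ hs => hs).of_le (WithTop.coe_le_coe.mpr le_top)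

lemma wave_div_pow_four {ω : F3} (hω : SmoothOnHalf ω) {t ρ z : ℝ} (hρ : 0 < ρ) :
    (ρ ^ 4)⁻¹ * (-pdT (pdT ω) t ρ z + pdR (pdR ω) t ρ z + pdZ (pdZ ω) t ρ z
        + ρ⁻¹ * pdR ω t ρ z - 4 * ρ⁻¹ * pdR ω t ρ z)
      = -pdT (pdT fun t ρ z => ω t ρ z / ρ ^ 4) t ρ z
        + pdR (pdR fun t ρ z => ω t ρ z / ρ ^ 4) t ρ z
        + pdZ (pdZ fun t ρ z => ω t ρ z / ρ ^ 4) t ρ z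
        + 5 * ρ⁻¹ * pdR (fun t ρ z => ω t ρ z / ρ ^ 4) t ρ z := by
  have hslice : ∀ t z : ℝ, (fun s => ω t s z / s ^ 4) = fun s => ω t s z * s ^ (-4 : ℤ) :=
    fun t z => funext fun s => by rw [zpow_neg, zpow_ofNat, div_eq_mul_inv]
  have hR : pdR (fun t ρ z => ω t ρ z / ρ ^ 4) t ρ z
      = pdR ω t ρ z * ρ ^ (-4 : ℤ) + (-4 : ℤ) * ω t ρ z * ρ ^ ((-4 : ℤ) - 1) := by
    simp only [pdR]
    rw [hslice]
    exact (hasDerivAt_mul_zpow _ ((hω.contDiffOn_radial t z 1).differentiableOn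
      one_ne_zero ρ hρ |>.differentiableAt (isOpen_Ioi.mem_nhds hρ)) hρ.ne').deriv
  have hRR : pdR (pdR fun t ρ z => ω t ρ z / ρ ^ 4) t ρ z
      = pdR (pdR ω) t ρ z * ρ ^ (-4 : ℤ) + 2 * (-4 : ℤ) * pdR ω t ρ z * ρ ^ ((-4 : ℤ) - 1)
        + (-4 : ℤ) * ((-4 : ℤ) - 1) * ω t ρ z * ρ ^ ((-4 : ℤ) - 2) := by
    simp only [pdR]
    rw [hslice]
    exact deriv_deriv_mul_zpow _ (hω.contDiffOn_radial t z 2) hρ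
  rw [pdT_div_radial ω (· ^ 4), pdT_div_radial _ (· ^ 4), pdZ_div_radial ω (· ^ 4),
    pdZ_div_radial _ (· ^ 4), hR, hRR]
  norm_num [zpow_neg]
  field_simp
  ring

/-- **Reduction of the twist equation to a 7-dimensional wave equation**: for smooth
`ω` on `ℝ × (0,∞) × ℝ` and `ω̄ = ω/ρ⁴`, the pointwise identity
`ρ⁻⁴(−∂²_tω + ∂²_ρω + ∂²_zω + ρ⁻¹∂_ρω − 4ρ⁻¹∂_ρω) = −∂²_tω̄ + ∂²_ρω̄ + ∂²_zω̄ + 5ρ⁻¹∂_ρω̄`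
holds, and consequently `−∂²_tω + ³Δω = 4ρ⁻¹∂_ρω` iff `−∂²_tω̄ + ⁽⁷⁾Δω̄ = 0`. -/
theorem stmt_4 (ω : F3) (hω : SmoothOnHalf ω) (ωb : F3)
    (hωb : ωb = fun t ρ z => ω t ρ z / ρ ^ 4) :
    (∀ t ρ z : ℝ, 0 < ρ →
      (ρ ^ 4)⁻¹ * (-pdT (pdT ω) t ρ z + pdR (pdR ω) t ρ z + pdZ (pdZ ω) t ρ z
          + ρ⁻¹ * pdR ω t ρ z - 4 * ρ⁻¹ * pdR ω t ρ z)
        = -pdT (pdT ωb) t ρ z + pdR (pdR ωb) t ρ z + pdZ (pdZ ωb) t ρ z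
          + 5 * ρ⁻¹ * pdR ωb t ρ z) ∧
    ((∀ t ρ z : ℝ, 0 < ρ →
        -pdT (pdT ω) t ρ z + lap3 ω t ρ z = 4 * ρ⁻¹ * pdR ω t ρ z) ↔
     (∀ t ρ z : ℝ, 0 < ρ →
        -pdT (pdT ωb) t ρ z + (pdR (pdR ωb) t ρ z + pdZ (pdZ ωb) t ρ z
          + 5 * ρ⁻¹ * pdR ωb t ρ z) = 0)) := by
  subst hωb
  refine ⟨fun t ρ z hρ => wave_div_pow_four hω hρ, forall₄_congr fun t ρ z hρ => ?_⟩
  have hid := wave_div_pow_four hω (t := t) (z := z) hρ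
  have hρ4 : ρ ^ 4 ≠ 0 := by positivity
  rw [lap3]
  constructor
  · intro h
    linear_combination (ρ ^ 4)⁻¹ * h - hid
  · intro h
    linear_combination (inv_mul_eq_iff_eq_mul₀ hρ4).mp hid + ρ ^ 4 * h
end
end

section
/- Let ω : ℝ × (0,∞) × ℝ → ℝ, (t,ρ,z) ↦ ω(t,ρ,z), be a smooth function and set ω̄ := ω/ρ⁴. Then the pointwise identity 2( (∂_t ω̄)² + (∂_ρ ω̄)² + (∂_z ω̄)² ) ρ⁵ − 2ρ⁻³ ( (∂_t ω)² + (∂_ρ ω)² + (∂_z ω)² ) = −∂_ρ ( 8 ω² / ρ⁴ ) holds on ℝ × (0,∞) × ℝ; in particular, the canonical 7-dimensional wave-energy density of ω̄ and the twist energy density of ω differ by a total ρ-derivative. -/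
noncomputable section

/-! Dividing by `ρ⁴` commutes with `∂_t` and `∂_z`, so those parts of `ρ⁵|∇(ω/ρ⁴)|²` are
exactly `ρ⁻³((∂_tω)² + (∂_zω)²)`. In the `ρ`-direction,
`ρ⁵(∂_ρ(ω/ρ⁴))² = ρ⁻³(∂_ρω)² - 8ρ⁻⁴ω∂_ρω + 16ρ⁻⁵ω²`, and twice the last two terms is
`-∂_ρ(8ω²/ρ⁴)`. -/

theorem SmoothOnHalf.differentiableAt_rho {f : F3} (hf : SmoothOnHalf f) (t z : ℝ) {ρ : ℝ}
    (hρ : 0 < ρ) : DifferentiableAt ℝ (fun s => f t s z) ρ := by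
  have hopen : IsOpen {q : ℝ × ℝ × ℝ | 0 < q.2.1} :=
    isOpen_lt continuous_const (continuous_fst.comp continuous_snd)
  have hf' := (hf.contDiffAt (hopen.mem_nhds (show 0 < (t, ρ, z).2.1 from hρ))).differentiableAt
    (by simp)
  exact hf'.comp (f := fun s : ℝ => ((t, s, z) : ℝ × ℝ × ℝ)) ρ (by fun_prop)

theorem HasDerivAt.div_pow_self {g : ℝ → ℝ} {g' ρ : ℝ} (hg : HasDerivAt g g' ρ) (hρ : ρ ≠ 0)
    (n : ℕ) : HasDerivAt (fun s => g s / s ^ n) ((ρ * g' - n * g ρ) / ρ ^ (n + 1)) ρ := by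
  refine (hg.fun_div (hasDerivAt_pow n ρ) (pow_ne_zero n hρ)).congr_deriv ?_
  rcases n with _ | n
  · simp [hρ]
  · rw [Nat.add_sub_cancel]
    field_simp
    ring

/-- **Energy densities differ by a boundary term**: for smooth `ω` on `ℝ × (0,∞) × ℝ`
and `ω̄ = ω/ρ⁴`, the canonical 7-dimensional wave-energy density of `ω̄` and the twist
energy density of `ω` differ by the total `ρ`-derivative `−∂_ρ(8ω²/ρ⁴)`. -/
theorem stmt_5 (ω : F3) (hω : SmoothOnHalf ω) (ωb : F3)
    (hωb : ωb = fun t ρ z => ω t ρ z / ρ ^ 4) :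
    ∀ t ρ z : ℝ, 0 < ρ →
      2 * ((pdT ωb t ρ z) ^ 2 + (pdR ωb t ρ z) ^ 2 + (pdZ ωb t ρ z) ^ 2) * ρ ^ 5
        - 2 * (ρ ^ 3)⁻¹ * ((pdT ω t ρ z) ^ 2 + (pdR ω t ρ z) ^ 2 + (pdZ ω t ρ z) ^ 2)
      = -pdR (fun t ρ z => 8 * (ω t ρ z) ^ 2 / ρ ^ 4) t ρ z := by
  intro t ρ z hρ
  subst hωb
  have hω' : HasDerivAt (fun s => ω t s z) (pdR ω t ρ z) ρ :=
    (hω.differentiableAt_rho t z hρ).hasDerivAt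
  have hT : pdT (fun t ρ z => ω t ρ z / ρ ^ 4) t ρ z = pdT ω t ρ z / ρ ^ 4 :=
    deriv_div_const _
  have hZ : pdZ (fun t ρ z => ω t ρ z / ρ ^ 4) t ρ z = pdZ ω t ρ z / ρ ^ 4 :=
    deriv_div_const _
  have hR : pdR (fun t ρ z => ω t ρ z / ρ ^ 4) t ρ z
      = (ρ * pdR ω t ρ z - 4 * ω t ρ z) / ρ ^ 5 := by
    rw [pdR, (hω'.div_pow_self hρ.ne' 4).deriv]
    norm_num
  have hR₈ : pdR (fun t ρ z => 8 * ω t ρ z ^ 2 / ρ ^ 4) t ρ z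
      = (16 * ρ * ω t ρ z * pdR ω t ρ z - 32 * ω t ρ z ^ 2) / ρ ^ 5 := by
    rw [pdR, (((hω'.fun_pow 2).const_mul 8).div_pow_self hρ.ne' 4).deriv]
    push_cast
    ring
  rw [hT, hZ, hR, hR₈]
  field_simp
  ring
end
end

section
/- Let (σ₁, β₁, χ₁) be smooth fields on ℝ_t × ℝ²₊ — a function σ₁, a vector field β₁^A, and a symmetric trace-free 2-tensor χ₁AB — satisfying, with p := ∂_tσ₁ − 2β₁^ρ/ρ, the equations (E1) −∂_t p + ³Δσ₁ = 0, the momentum constraint (M) ∂^Bχ₁AB = −p ∂_Aρ (for all t), and the shift equation (S) (𝓛β₁)_AB = 2ρ⁻¹ χ₁AB. Then the energy density ε_σ := (2p² + 2|∂σ₁|² + 4ρ⁻²χ₁^{AB}χ₁AB)ρ satisfies the pointwise divergence identity ∂_t ε_σ = ∂_A t^A on ℝ_t × ℝ²₊, where t_A := 4ρ (∂_tσ₁) ∂_Aσ₁ + 8 β₁^B ∂_tχ₁AB. -/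
/-! Expanding `∂_A t^A` by the product rule and commuting `∂_t` with `∂_A`, three groups of terms
appear. (E1) turns `4ρ (∂_tσ₁) ³Δσ₁` into `4ρ (∂_tσ₁) ∂_t p`. Since `∂_tχ₁` is symmetric and
trace-free, `8 ∂^Aβ₁^B ∂_tχ₁AB` only sees `½(𝓛β₁)_AB`, which is `ρ⁻¹χ₁AB` by (S). The time
derivative of (M) turns `8 β₁^B ∂_t∂^Aχ₁AB` into `-8 β₁^ρ ∂_t p`. Because
`ρ ∂_tσ₁ - 2β₁^ρ = ρ p`, the sum is `∂_t ε_σ`. -/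

noncomputable section

/-- Spatial partial derivative in direction `A` (`A = 0` is `ρ`, `A = 1` is `z`). -/
noncomputable def pdA (A : Fin 2) : F3 → F3 := if A = 0 then pdR else pdZ

open Filter Topology

theorem ContDiffAt.lineDeriv_lineDeriv_comm {E F : Type*} [NormedAddCommGroup E]
    [NormedSpace ℝ E] [NormedAddCommGroup F] [NormedSpace ℝ F] {f : E → F} {x : E}
    (hf : ContDiffAt ℝ 2 f x) (v w : E) :
    lineDeriv ℝ (fun y => lineDeriv ℝ f y v) x w
      = lineDeriv ℝ (fun y => lineDeriv ℝ f y w) x v := by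
  have hdiff : ∀ᶠ y in 𝓝 x, DifferentiableAt ℝ f y :=
    (hf.eventually (by simp)).mono fun y hy => hy.differentiableAt (by simp)
  have hf' : DifferentiableAt ℝ (fderiv ℝ f) x :=
    (hf.fderiv_right (m := 1) le_rfl).differentiableAt one_ne_zero
  have second (u u' : E) :
      lineDeriv ℝ (fun y => lineDeriv ℝ f y u) x u' = fderiv ℝ (fderiv ℝ f) x u' u := by
    have heq : (fun y => lineDeriv ℝ f y u) =ᶠ[𝓝 x] fun y => fderiv ℝ f y u :=
      hdiff.mono fun y hy => hy.lineDeriv_eq_fderiv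
    have happly : DifferentiableAt ℝ (fun y => fderiv ℝ f y u) x :=
      hf'.clm_apply (differentiableAt_const u)
    rw [heq.lineDeriv_eq, happly.lineDeriv_eq_fderiv,
      fderiv_clm_apply hf' (differentiableAt_const u)]
    simp
  rw [second, second, hf.isSymmSndFDerivAt (by simp)]

theorem ContDiffOn.lineDeriv {E F : Type*} [NormedAddCommGroup E]
    [NormedSpace ℝ E] [NormedAddCommGroup F] [NormedSpace ℝ F] {f : E → F} {s : Set E}
    {m n : WithTop ℕ∞} (hf : ContDiffOn ℝ n f s) (hs : IsOpen s) (hmn : m + 1 ≤ n) (v : E) :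
    ContDiffOn ℝ m (fun y => lineDeriv ℝ f y v) s := by
  refine ((hf.fderiv_of_isOpen hs hmn).clm_apply (contDiffOn_const (c := v))).congr
    fun y hy => ?_
  exact ((hf.contDiffAt (hs.mem_nhds hy)).differentiableAt
    (by rintro rfl; exact absurd hmn (by simp))).lineDeriv_eq_fderiv

/-- With `G_AB = ∂_Aβ_B` the right-hand side is `(𝓛β)_AB X_AB`. -/
theorem two_mul_sum_sum_mul_of_symm_of_trace_eq_zero {ι R : Type*} [Fintype ι]
    [DecidableEq ι] [CommRing R] (G X : ι → ι → R) (hX : ∀ i j, X i j = X j i)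
    (htr : ∑ i, X i i = 0) :
    2 * ∑ i, ∑ j, G i j * X i j
      = ∑ i, ∑ j, (G i j + G j i - (if i = j then 1 else 0) * ∑ k, G k k) * X i j := by
  have htranspose : ∑ i, ∑ j, G j i * X i j = ∑ i, ∑ j, G i j * X i j := by
    rw [Finset.sum_comm]
    simp_rw [hX]
  have htrace : ∑ i, ∑ j, (if i = j then 1 else 0) * (∑ k, G k k) * X i j = 0 := by
    simp [ite_mul, ← Finset.mul_sum, htr]
  simp only [sub_mul, add_mul, Finset.sum_sub_distrib, Finset.sum_add_distrib, htranspose,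
    htrace]
  ring

def uncurry3 (f : F3) : ℝ × ℝ × ℝ → ℝ := fun q => f q.1 q.2.1 q.2.2

def dirA (A : Fin 2) : ℝ × ℝ × ℝ := (0, if A = 0 then 1 else 0, if A = 0 then 0 else 1)

@[simp] theorem pdA_zero : pdA 0 = pdR := rfl

@[simp] theorem pdA_one : pdA 1 = pdZ := rfl

/- For every `f`, smooth or not, `pdT` and `pdA` are line derivatives of the uncurried function;
this transports Mathlib's line-derivative calculus to them. -/
theorem pdT_eq_lineDeriv (f : F3) (t ρ z : ℝ) :
    pdT f t ρ z = lineDeriv ℝ (uncurry3 f) (t, ρ, z) (1, 0, 0) := by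
  simp [pdT, lineDeriv, uncurry3, deriv_comp_const_add (fun s => f s ρ z)]

theorem pdA_eq_lineDeriv (A : Fin 2) (f : F3) (t ρ z : ℝ) :
    pdA A f t ρ z = lineDeriv ℝ (uncurry3 f) (t, ρ, z) (dirA A) := by
  fin_cases A
  · simp [pdR, lineDeriv, uncurry3, dirA, deriv_comp_const_add (fun s => f t s z)]
  · simp [pdZ, lineDeriv, uncurry3, dirA, deriv_comp_const_add (fun s => f t ρ s)]

theorem isOpen_halfSpace : IsOpen {q : ℝ × ℝ × ℝ | 0 < q.2.1} :=
  isOpen_lt continuous_const (continuous_fst.comp continuous_snd)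

namespace SmoothOnHalf

variable {f : F3} {t ρ z : ℝ}

theorem contDiffAt (hf : SmoothOnHalf f) (hρ : 0 < ρ) :
    ContDiffAt ℝ (⊤ : ℕ∞) (uncurry3 f) (t, ρ, z) :=
  ContDiffOn.contDiffAt hf (isOpen_halfSpace.mem_nhds hρ)

theorem differentiableAt (hf : SmoothOnHalf f) (hρ : 0 < ρ) :
    DifferentiableAt ℝ (uncurry3 f) (t, ρ, z) :=
  (hf.contDiffAt hρ).differentiableAt (by simp)

theorem hasDerivAt_pdT (hf : SmoothOnHalf f) (hρ : 0 < ρ) :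
    HasDerivAt (fun s => f s ρ z) (pdT f t ρ z) t := by
  have hslice : DifferentiableAt ℝ (uncurry3 f ∘ fun s => (s, ρ, z)) t :=
    (hf.differentiableAt (t := t) (z := z) hρ).comp t
      (differentiableAt_id.prodMk (differentiableAt_const (ρ, z)))
  exact hslice.hasDerivAt

theorem hasLineDerivAt_pdA (hf : SmoothOnHalf f) (hρ : 0 < ρ) (A : Fin 2) :
    HasLineDerivAt ℝ (uncurry3 f) (pdA A f t ρ z) (t, ρ, z) (dirA A) := by
  rw [pdA_eq_lineDeriv]
  exact (hf.differentiableAt hρ).lineDifferentiableAt.hasLineDerivAt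

theorem pdT (hf : SmoothOnHalf f) : SmoothOnHalf (pdT f) :=
  (ContDiffOn.lineDeriv hf isOpen_halfSpace le_rfl _).congr fun _ _ =>
    pdT_eq_lineDeriv f _ _ _

theorem pdA (hf : SmoothOnHalf f) (A : Fin 2) : SmoothOnHalf (pdA A f) :=
  (ContDiffOn.lineDeriv hf isOpen_halfSpace le_rfl _).congr fun _ _ =>
    pdA_eq_lineDeriv A f _ _ _

end SmoothOnHalf

theorem pdA_pdT_comm {f : F3} (hf : SmoothOnHalf f) {t ρ z : ℝ} (hρ : 0 < ρ) (A : Fin 2) :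
    pdA A (pdT f) t ρ z = pdT (pdA A f) t ρ z := by
  have hT : uncurry3 (pdT f) = fun y => lineDeriv ℝ (uncurry3 f) y (1, 0, 0) :=
    funext fun _ => pdT_eq_lineDeriv f _ _ _
  have hA : uncurry3 (pdA A f) = fun y => lineDeriv ℝ (uncurry3 f) y (dirA A) :=
    funext fun _ => pdA_eq_lineDeriv A f _ _ _
  rw [pdA_eq_lineDeriv, pdT_eq_lineDeriv, hT, hA]
  exact ((hf.contDiffAt hρ).of_le (WithTop.coe_le_coe.mpr le_top)).lineDeriv_lineDeriv_comm _ _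

theorem pdT_sum {ι : Type*} (s : Finset ι) {f : ι → F3} (hf : ∀ i ∈ s, SmoothOnHalf (f i))
    {t ρ z : ℝ} (hρ : 0 < ρ) :
    pdT (fun t ρ z => ∑ i ∈ s, f i t ρ z) t ρ z = ∑ i ∈ s, pdT (f i) t ρ z :=
  (HasDerivAt.fun_sum fun i hi => (hf i hi).hasDerivAt_pdT hρ).deriv

theorem pdT_eq_zero_of_forall {f : F3} {t ρ z : ℝ} (hf : ∀ s, f s ρ z = 0) :
    pdT f t ρ z = 0 := by
  simp [pdT, hf]

def energyDensity (σ p : F3) (χ : Fin 2 → Fin 2 → F3) : F3 := fun t ρ z =>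
  (2 * (p t ρ z) ^ 2 + 2 * ((pdR σ t ρ z) ^ 2 + (pdZ σ t ρ z) ^ 2)
    + 4 * (ρ ^ 2)⁻¹ * ∑ A, ∑ B, (χ A B t ρ z) ^ 2) * ρ

def energyFlux (σ : F3) (β : Fin 2 → F3) (χ : Fin 2 → Fin 2 → F3) (A : Fin 2) : F3 :=
  fun t ρ z => 4 * ρ * pdT σ t ρ z * pdA A σ t ρ z + 8 * ∑ B, β B t ρ z * pdT (χ A B) t ρ z

section EnergyIdentity

variable {σ p : F3} {β : Fin 2 → F3} {χ : Fin 2 → Fin 2 → F3} {t ρ z : ℝ}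

theorem pdT_energyDensity (hσ : SmoothOnHalf σ) (hp : SmoothOnHalf p)
    (hχ : ∀ A B, SmoothOnHalf (χ A B)) (hρ : 0 < ρ) :
    pdT (energyDensity σ p χ) t ρ z
      = (4 * p t ρ z * pdT p t ρ z
          + 4 * ∑ A, pdA A σ t ρ z * pdT (pdA A σ) t ρ z
          + 8 * (ρ ^ 2)⁻¹ * ∑ A, ∑ B, χ A B t ρ z * pdT (χ A B) t ρ z) * ρ := by
  have slice {g : F3} (hg : SmoothOnHalf g) := hg.hasDerivAt_pdT (t := t) (z := z) hρ
  have hχsq := HasDerivAt.fun_sum (u := Finset.univ) fun A _ =>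
    HasDerivAt.fun_sum (u := Finset.univ) fun B _ => (slice (hχ A B)).pow 2
  have H := ((((slice hp).pow 2).const_mul 2).add
    ((((slice (hσ.pdA 0)).pow 2).add ((slice (hσ.pdA 1)).pow 2)).const_mul 2)
    |>.add (hχsq.const_mul (4 * (ρ ^ 2)⁻¹))).mul_const ρ
  refine H.deriv.trans ?_
  simp only [Fin.sum_univ_two]
  push_cast
  ring

theorem pdA_energyFlux (hσ : SmoothOnHalf σ) (hβ : ∀ A, SmoothOnHalf (β A))
    (hχ : ∀ A B, SmoothOnHalf (χ A B)) (hρ : 0 < ρ) (A : Fin 2) :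
    pdA A (energyFlux σ β χ A) t ρ z
      = 4 * (if A = 0 then 1 else 0) * pdT σ t ρ z * pdA A σ t ρ z
        + 4 * ρ * pdT (pdA A σ) t ρ z * pdA A σ t ρ z
        + 4 * ρ * pdT σ t ρ z * pdA A (pdA A σ) t ρ z
        + 8 * ∑ B, (pdA A (β B) t ρ z * pdT (χ A B) t ρ z
          + β B t ρ z * pdT (pdA A (χ A B)) t ρ z) := by
  have hρline : HasDerivAt (fun s : ℝ => ρ + s * (dirA A).2.1) (if A = 0 then 1 else 0) 0 := by
    simpa [dirA] using ((hasDerivAt_id (0 : ℝ)).mul_const (dirA A).2.1).const_add ρ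
  have line {g : F3} (hg : SmoothOnHalf g) := hg.hasLineDerivAt_pdA (t := t) (z := z) hρ A
  have hβχ := HasDerivAt.fun_sum (u := Finset.univ) fun B _ =>
    (line (hβ B)).mul (line (hχ A B).pdT)
  have H := (((hρline.const_mul 4).mul (line hσ.pdT)).mul (line (hσ.pdA A))).add
    (hβχ.const_mul 8)
  rw [pdA_eq_lineDeriv]
  refine H.deriv.trans ?_
  simp only [uncurry3, zero_smul, add_zero, zero_mul, Pi.mul_apply, pdA_pdT_comm hσ hρ,
    pdA_pdT_comm (hχ _ _) hρ]
  ring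

theorem sum_pdT_pdA_of_momentum (hχ : ∀ A B, SmoothOnHalf (χ A B))
    (hsym : ∀ A B, χ A B = χ B A)
    (hM : ∀ A s, ∑ B, pdA B (χ A B) s ρ z = -(p s ρ z) * (if A = 0 then 1 else 0))
    (hρ : 0 < ρ) (B : Fin 2) :
    ∑ A, pdT (pdA A (χ A B)) t ρ z = -pdT p t ρ z * (if B = 0 then 1 else 0) := by
  have hslice (s : ℝ) : ∑ A, pdA A (χ A B) s ρ z = -p s ρ z * (if B = 0 then 1 else 0) :=
    (Finset.sum_congr rfl fun A _ => by rw [hsym]).trans (hM B s)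
  rw [← pdT_sum _ (fun A _ => (hχ A B).pdA A) hρ]
  simp only [pdT, hslice, deriv_mul_const_field, deriv.fun_neg]

theorem sum_sum_pdA_mul_pdT_of_shift (hχ : ∀ A B, SmoothOnHalf (χ A B))
    (hsym : ∀ A B, χ A B = χ B A) (htrace : ∀ s, ∑ A, χ A A s ρ z = 0)
    (hS : ∀ A B, pdA A (β B) t ρ z + pdA B (β A) t ρ z
      - (if A = B then (1 : ℝ) else 0) * ∑ C, pdA C (β C) t ρ z = 2 * ρ⁻¹ * χ A B t ρ z)
    (hρ : 0 < ρ) :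
    ∑ A, ∑ B, pdA A (β B) t ρ z * pdT (χ A B) t ρ z
      = ρ⁻¹ * ∑ A, ∑ B, χ A B t ρ z * pdT (χ A B) t ρ z := by
  have htrace_t : ∑ A, pdT (χ A A) t ρ z = 0 := by
    rw [← pdT_sum _ (fun A _ => hχ A A) hρ]
    exact pdT_eq_zero_of_forall htrace
  have h := two_mul_sum_sum_mul_of_symm_of_trace_eq_zero
    (fun A B => pdA A (β B) t ρ z) (fun A B => pdT (χ A B) t ρ z)
    (fun A B => by rw [hsym]) htrace_t
  simp only [hS, mul_assoc, ← Finset.mul_sum] at h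
  linear_combination h / 2

end EnergyIdentity

/-- **Divergence identity for the σ-sector energy density on Minkowski** (Theorem 1(i),
conservation of `m_σ`, pointwise form): for a solution `(σ₁, β₁, χ₁)` of the linearized
equations `(E1)`, `(M)`, `(S)`, the density
`ε_σ = (2p² + 2|∂σ₁|² + 4ρ⁻²χ₁^{AB}χ₁_{AB})ρ` satisfies `∂_t ε_σ = ∂_A t^A` with
`t_A = 4ρ(∂_tσ₁)∂_Aσ₁ + 8β₁^B∂_tχ₁_{AB}`. -/
theorem stmt_6 (σ₁ : F3) (β₁ : Fin 2 → F3) (χ₁ : Fin 2 → Fin 2 → F3)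
    (hσ : SmoothOnHalf σ₁) (hβ : ∀ A, SmoothOnHalf (β₁ A))
    (hχ : ∀ A B, SmoothOnHalf (χ₁ A B))
    (hsym : ∀ A B, χ₁ A B = χ₁ B A)
    (htrace : ∀ t ρ z : ℝ, 0 < ρ → ∑ A, χ₁ A A t ρ z = 0)
    (p : F3) (hp : p = fun t ρ z => pdT σ₁ t ρ z - 2 * β₁ 0 t ρ z / ρ)
    (hE1 : ∀ t ρ z : ℝ, 0 < ρ → -pdT p t ρ z + lap3 σ₁ t ρ z = 0)
    (hM : ∀ A, ∀ t ρ z : ℝ, 0 < ρ →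
      ∑ B, pdA B (χ₁ A B) t ρ z = -(p t ρ z) * (if A = 0 then 1 else 0))
    (hS : ∀ A B, ∀ t ρ z : ℝ, 0 < ρ →
      pdA A (β₁ B) t ρ z + pdA B (β₁ A) t ρ z
          - (if A = B then (1 : ℝ) else 0) * ∑ C, pdA C (β₁ C) t ρ z
        = 2 * ρ⁻¹ * χ₁ A B t ρ z) :
    ∀ t ρ z : ℝ, 0 < ρ →
      pdT (fun t ρ z =>
          (2 * (p t ρ z) ^ 2 + 2 * ((pdR σ₁ t ρ z) ^ 2 + (pdZ σ₁ t ρ z) ^ 2)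
            + 4 * (ρ ^ 2)⁻¹ * ∑ A, ∑ B, (χ₁ A B t ρ z) ^ 2) * ρ) t ρ z
      = ∑ A, pdA A (fun t ρ z =>
          4 * ρ * pdT σ₁ t ρ z * pdA A σ₁ t ρ z
            + 8 * ∑ B, β₁ B t ρ z * pdT (χ₁ A B) t ρ z) t ρ z := by
  intro t ρ z hρ
  have hp_smooth : SmoothOnHalf p := hp ▸ ContDiffOn.sub hσ.pdT
    ((contDiffOn_const.mul (hβ 0)).div (contDiff_fst.comp contDiff_snd).contDiffOn
      fun _ hq => hq.ne')
  have hp_val : p t ρ z = pdT σ₁ t ρ z - 2 * β₁ 0 t ρ z / ρ := by rw [hp]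
  have hwave : ∑ A, pdA A (pdA A σ₁) t ρ z = pdT p t ρ z - ρ⁻¹ * pdR σ₁ t ρ z := by
    have h := hE1 t ρ z hρ
    simp only [lap3, Fin.sum_univ_two, pdA_zero, pdA_one] at h ⊢
    linarith
  have hmomentum (B : Fin 2) :=
    sum_pdT_pdA_of_momentum hχ hsym (fun A s => hM A s ρ z hρ) hρ (t := t) B
  have hmomentum₀ := hmomentum 0
  have hmomentum₁ := hmomentum 1
  have hshift := sum_sum_pdA_mul_pdT_of_shift hχ hsym (fun s => htrace s ρ z hρ)
    (fun A B => hS A B t ρ z hρ) hρ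
  change pdT (energyDensity σ₁ p χ₁) t ρ z = ∑ A, pdA A (energyFlux σ₁ β₁ χ₁ A) t ρ z
  rw [pdT_energyDensity hσ hp_smooth hχ hρ,
    Finset.sum_congr rfl fun A _ => pdA_energyFlux hσ hβ hχ hρ A]
  simp only [Fin.sum_univ_two, Fin.isValue, pdA_zero, pdA_one, ↓reduceIte, mul_one, one_ne_zero,
    mul_zero, mul_ite, ite_mul, zero_mul, zero_add] at hwave hmomentum₀ hmomentum₁ hshift ⊢
  linear_combination (norm := (field_simp; ring)) 4 * ρ * pdT p t ρ z * hp_val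
    - 4 * ρ * pdT σ₁ t ρ z * hwave - 8 * hshift
    - 8 * β₁ 0 t ρ z * hmomentum₀ - 8 * β₁ 1 t ρ z * hmomentum₁
end
end
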